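/- Let (u, w) be a smooth periodic solution on Ω = [0,L]² × [0,1] of the viscous Hasegawa–Mima system ∂_t w + u·∇_h w − ψ_z = (1/Re) Δ_h w, ∂_t ω + u·∇_h ω − w_z = (1/Re) Δ_h ω + ε² ψ_zz, with ∇_h · u = 0, ω = ∇_h × u, ψ = (−Δ_h)^{−1} ω. Then for every t ≥ 0 the energy identity holds: ½(‖w(t)‖₂² + ‖u(t)‖₂²) + ∫₀ᵗ [ (1/Re)(‖∇_h w‖₂² + ‖∇_h u‖₂²) + ε² ‖ψ_z‖₂² ] ds = ½(‖w(0)‖₂² + ‖u(0)‖₂²). -/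

import Mathlib

open MeasureTheory Set

noncomputable section

/-- The periodic box Ω = [0,L]² × [0,1]. -/
def Box (L : ℝ) : Set (ℝ × ℝ × ℝ) := Icc 0 L ×ˢ Icc 0 L ×ˢ Icc 0 1

/-- The horizontal square [0,L]². -/
def Sq (L : ℝ) : Set (ℝ × ℝ) := Icc 0 L ×ˢ Icc 0 L

/-- Partial derivative in x. -/
def pdx (f : ℝ × ℝ × ℝ → ℝ) (p : ℝ × ℝ × ℝ) : ℝ := fderiv ℝ f p (1, 0, 0)
/-- Partial derivative in y. -/
def pdy (f : ℝ × ℝ × ℝ → ℝ) (p : ℝ × ℝ × ℝ) : ℝ := fderiv ℝ f p (0, 1, 0)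
/-- Partial derivative in z. -/
def pdz (f : ℝ × ℝ × ℝ → ℝ) (p : ℝ × ℝ × ℝ) : ℝ := fderiv ℝ f p (0, 0, 1)

/-- Periodicity: period L in x and y, period 1 in z. -/
def Per (L : ℝ) (f : ℝ × ℝ × ℝ → ℝ) : Prop :=
  (∀ x y z : ℝ, f (x + L, y, z) = f (x, y, z)) ∧
  (∀ x y z : ℝ, f (x, y + L, z) = f (x, y, z)) ∧
  (∀ x y z : ℝ, f (x, y, z + 1) = f (x, y, z))

/-- The L²(Ω) norm. -/
def nL2 (L : ℝ) (f : ℝ × ℝ × ℝ → ℝ) : ℝ := (∫ p in Box L, (f p) ^ 2) ^ ((1 : ℝ) / 2)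

/-- The L² norm of the horizontal gradient ∇_h f. -/
def nGH (L : ℝ) (f : ℝ × ℝ × ℝ → ℝ) : ℝ :=
  (∫ p in Box L, (pdx f p) ^ 2 + (pdy f p) ^ 2) ^ ((1 : ℝ) / 2)

/-- Vertical vorticity ω = ∂_x u₂ − ∂_y u₁ at time t. -/
def omg (u1 u2 : ℝ → ℝ × ℝ × ℝ → ℝ) (t : ℝ) (q : ℝ × ℝ × ℝ) : ℝ :=
  pdx (u2 t) q - pdy (u1 t) q

/-- A smooth periodic solution of the viscous Hasegawa–Mima system
∂_t w + u·∇_h w − ψ_z = (1/Re) Δ_h w,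
∂_t ω + u·∇_h ω − w_z = (1/Re) Δ_h ω + ε² ψ_zz,
∇_h · u = 0, ω = ∇_h × u, ψ = (−Δ_h)⁻¹ ω of zero horizontal mean, u = (ψ_y, −ψ_x). -/
def IsSol (L Re ε : ℝ) (u1 u2 w ψ : ℝ → ℝ × ℝ × ℝ → ℝ) : Prop :=
  ContDiff ℝ (⊤ : ℕ∞) (Function.uncurry u1) ∧ ContDiff ℝ (⊤ : ℕ∞) (Function.uncurry u2) ∧
  ContDiff ℝ (⊤ : ℕ∞) (Function.uncurry w) ∧ ContDiff ℝ (⊤ : ℕ∞) (Function.uncurry ψ) ∧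
  (∀ t, Per L (u1 t) ∧ Per L (u2 t) ∧ Per L (w t) ∧ Per L (ψ t)) ∧
  (∀ t p, pdx (u1 t) p + pdy (u2 t) p = 0) ∧
  (∀ t p, u1 t p = pdy (ψ t) p) ∧
  (∀ t p, u2 t p = -(pdx (ψ t) p)) ∧
  (∀ t z, (∫ q in Sq L, ψ t (q.1, q.2, z)) = 0) ∧
  (∀ t p, deriv (fun s => w s p) t
      + (u1 t p * pdx (w t) p + u2 t p * pdy (w t) p) - pdz (ψ t) p
      = (1 / Re) * (pdx (pdx (w t)) p + pdy (pdy (w t)) p)) ∧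
  (∀ t p, deriv (fun s => omg u1 u2 s p) t
      + (u1 t p * pdx (omg u1 u2 t) p + u2 t p * pdy (omg u1 u2 t) p) - pdz (w t) p
      = (1 / Re) * (pdx (pdx (omg u1 u2 t)) p + pdy (pdy (omg u1 u2 t)) p)
        + ε ^ 2 * pdz (pdz (ψ t)) p)

namespace HMtool
open Function

abbrev E3 := ℝ × ℝ × ℝ

/-- time derivative of a time-dependent field -/
def td (f : ℝ → E3 → ℝ) (s : ℝ) (p : E3) : ℝ := deriv (fun r => f r p) s

section slices
variable {H : ℝ × E3 → ℝ} {s : ℝ} {p : E3}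

lemma slice_hasDerivAt (hH : DifferentiableAt ℝ H (s, p)) :
    HasDerivAt (fun r => H (r, p)) (fderiv ℝ H (s, p) (1, 0)) s :=
  hH.hasFDerivAt.comp_hasDerivAt s (HasDerivAt.prodMk (hasDerivAt_id s) (hasDerivAt_const s p))

lemma td_slice (hH : DifferentiableAt ℝ H (s, p)) :
    deriv (fun r => H (r, p)) s = fderiv ℝ H (s, p) (1, 0) :=
  (slice_hasDerivAt hH).deriv

lemma space_slice_hasFDerivAt (hH : DifferentiableAt ℝ H (s, p)) :
    HasFDerivAt (fun q => H (s, q))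
      ((fderiv ℝ H (s, p)).comp ((0 : E3 →L[ℝ] ℝ).prod (ContinuousLinearMap.id ℝ E3))) p :=
  hH.hasFDerivAt.comp p (HasFDerivAt.prodMk (hasFDerivAt_const s p) (hasFDerivAt_id p))

lemma pd_slice (hH : DifferentiableAt ℝ H (s, p)) (v : E3) :
    fderiv ℝ (fun q => H (s, q)) p v = fderiv ℝ H (s, p) ((0 : ℝ), v) := by
  rw [(space_slice_hasFDerivAt hH).fderiv]; rfl

end slices

lemma fderiv_swap {V : Type*} [NormedAddCommGroup V] [NormedSpace ℝ V]
    (F : V → ℝ) (hF : ContDiff ℝ (⊤ : ℕ∞) F) (q u v : V) :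
    fderiv ℝ (fun x => fderiv ℝ F x u) q v = fderiv ℝ (fun x => fderiv ℝ F x v) q u := by
  have hd1 : ∀ y, HasFDerivAt F (fderiv ℝ F y) y :=
    fun y => (hF.differentiable (by simp) y).hasFDerivAt
  have hd2 : HasFDerivAt (fderiv ℝ F) (fderiv ℝ (fderiv ℝ F) q) q :=
    (((hF.fderiv_right (m := (⊤ : ℕ∞)) (by simp)).differentiable (by simp)) q).hasFDerivAt
  have hs := second_derivative_symmetric hd1 hd2 u v
  have e : ∀ u : V, fderiv ℝ (fun x => fderiv ℝ F x u) q
      = (ContinuousLinearMap.apply ℝ ℝ u).comp (fderiv ℝ (fderiv ℝ F) q) := fun u =>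
    ((ContinuousLinearMap.apply ℝ ℝ u).hasFDerivAt.comp q hd2).fderiv
  rw [e u, e v]
  simpa using hs.symm

section reps
variable {f : ℝ → E3 → ℝ} (hf : ContDiff ℝ (⊤ : ℕ∞) (uncurry f))
include hf

lemma td_rep (s : ℝ) (p : E3) : td f s p = fderiv ℝ (uncurry f) (s, p) (1, 0) :=
  td_slice ((hf.differentiable (by simp)) (s, p))

lemma pd_rep (v : E3) (s : ℝ) (p : E3) :
    fderiv ℝ (f s) p v = fderiv ℝ (uncurry f) (s, p) ((0 : ℝ), v) :=
  pd_slice ((hf.differentiable (by simp)) (s, p)) v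

lemma contDiff_slice (s : ℝ) : ContDiff ℝ (⊤ : ℕ∞) (f s) :=
  hf.comp (contDiff_const.prodMk contDiff_id)

lemma contDiff_fderiv_apply (vv : ℝ × E3) :
    ContDiff ℝ (⊤ : ℕ∞) (fun x : ℝ × E3 => fderiv ℝ (uncurry f) x vv) :=
  (hf.fderiv_right (by simp)).clm_apply contDiff_const

lemma contDiff_td (s : ℝ) : ContDiff ℝ (⊤ : ℕ∞) (td f s) := by
  have h : td f s = fun p => fderiv ℝ (uncurry f) (s, p) (1, 0) :=
    funext fun p => td_rep hf s p
  rw [h]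
  exact (contDiff_fderiv_apply hf (1, 0)).comp (contDiff_const.prodMk contDiff_id)

lemma hasDerivAt_time (s : ℝ) (p : E3) :
    HasDerivAt (fun r => f r p) (td f s p) s := by
  have h := slice_hasDerivAt ((hf.differentiable (by simp)) (s, p)) (H := uncurry f)
  rwa [← td_rep hf s p] at h

/-- commuting the time derivative past a spatial derivative -/
lemma td_pd_comm (v : E3) (s : ℝ) (p : E3) :
    td (fun r q => fderiv ℝ (f r) q v) s p = fderiv ℝ (td f s) p v := by
  have hF := contDiff_fderiv_apply hf ((0 : ℝ), v)
  have h1 : (fun r => fderiv ℝ (f r) p v)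
      = fun r => fderiv ℝ (uncurry f) (r, p) ((0 : ℝ), v) :=
    funext fun r => pd_rep hf v r p
  have lhs : td (fun r q => fderiv ℝ (f r) q v) s p
      = fderiv ℝ (fun x => fderiv ℝ (uncurry f) x ((0 : ℝ), v)) (s, p) (1, 0) := by
    show deriv (fun r => fderiv ℝ (f r) p v) s = _
    rw [h1]
    exact td_slice ((hF.differentiable (by simp)) (s, p))
  have h2 : td f s = fun q => fderiv ℝ (uncurry f) (s, q) (1, 0) :=
    funext fun q => td_rep hf s q
  have hG := contDiff_fderiv_apply hf ((1 : ℝ), 0)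
  have rhs : fderiv ℝ (td f s) p v
      = fderiv ℝ (fun x => fderiv ℝ (uncurry f) x ((1 : ℝ), 0)) (s, p) ((0 : ℝ), v) := by
    rw [h2]
    exact pd_slice ((hG.differentiable (by simp)) (s, p)) v
  rw [lhs, rhs]
  exact fderiv_swap (uncurry f) hf (s, p) _ _

end reps

end HMtool

section toolkit2
open HMtool Function

lemma pdx_def (g : E3 → ℝ) (p : E3) : pdx g p = fderiv ℝ g p (1,0,0) := rfl
lemma pdy_def (g : E3 → ℝ) (p : E3) : pdy g p = fderiv ℝ g p (0,1,0) := rfl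
lemma pdz_def (g : E3 → ℝ) (p : E3) : pdz g p = fderiv ℝ g p (0,0,1) := rfl

lemma contDiff_pdv (g : E3 → ℝ) (hg : ContDiff ℝ (⊤ : ℕ∞) g) (v : E3) :
    ContDiff ℝ (⊤ : ℕ∞) (fun p => fderiv ℝ g p v) :=
  (hg.fderiv_right (by simp)).clm_apply contDiff_const

lemma contDiff_pdx (g : E3 → ℝ) (hg : ContDiff ℝ (⊤ : ℕ∞) g) : ContDiff ℝ (⊤ : ℕ∞) (pdx g) :=
  contDiff_pdv g hg _
lemma contDiff_pdy (g : E3 → ℝ) (hg : ContDiff ℝ (⊤ : ℕ∞) g) : ContDiff ℝ (⊤ : ℕ∞) (pdy g) :=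
  contDiff_pdv g hg _
lemma contDiff_pdz (g : E3 → ℝ) (hg : ContDiff ℝ (⊤ : ℕ∞) g) : ContDiff ℝ (⊤ : ℕ∞) (pdz g) :=
  contDiff_pdv g hg _

lemma fderiv_shift (g : E3 → ℝ) (hg : Differentiable ℝ g) (c : E3)
    (hs : ∀ q, g (q + c) = g q) (p : E3) : fderiv ℝ g (p + c) = fderiv ℝ g p := by
  have h1 : HasFDerivAt (fun q : E3 => g (q + c)) (fderiv ℝ g (p + c)) p := by
    have h := (hg (p + c)).hasFDerivAt.comp p ((hasFDerivAt_id p).add_const c)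
    simpa [Function.comp_def] using h
  rw [funext hs] at h1
  exact h1.fderiv.symm

lemma per_pdv {L : ℝ} {g : E3 → ℝ} (hper : Per L g) (hg : Differentiable ℝ g) (v : E3) :
    Per L (fun p => fderiv ℝ g p v) := by
  refine ⟨fun x y z => ?_, fun x y z => ?_, fun x y z => ?_⟩
  · show fderiv ℝ g (x + L, y, z) v = fderiv ℝ g (x, y, z) v
    have e : ((x + L, y, z) : E3) = (x, y, z) + (L, 0, 0) := by simp
    rw [e, fderiv_shift g hg (L,0,0) (fun q => by obtain ⟨a,b,c⟩ := q; simpa using hper.1 a b c)]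
  · show fderiv ℝ g (x, y + L, z) v = fderiv ℝ g (x, y, z) v
    have e : ((x, y + L, z) : E3) = (x, y, z) + (0, L, 0) := by simp
    rw [e, fderiv_shift g hg (0,L,0) (fun q => by obtain ⟨a,b,c⟩ := q; simpa using hper.2.1 a b c)]
  · show fderiv ℝ g (x, y, z + 1) v = fderiv ℝ g (x, y, z) v
    have e : ((x, y, z + 1) : E3) = (x, y, z) + (0, 0, 1) := by simp
    rw [e, fderiv_shift g hg (0,0,1) (fun q => by obtain ⟨a,b,c⟩ := q; simpa using hper.2.2 a b c)]

lemma per_pdx {L : ℝ} {g : E3 → ℝ} (hper : Per L g) (hg : Differentiable ℝ g) :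
    Per L (pdx g) := per_pdv hper hg _
lemma per_pdy {L : ℝ} {g : E3 → ℝ} (hper : Per L g) (hg : Differentiable ℝ g) :
    Per L (pdy g) := per_pdv hper hg _
lemma per_pdz {L : ℝ} {g : E3 → ℝ} (hper : Per L g) (hg : Differentiable ℝ g) :
    Per L (pdz g) := per_pdv hper hg _

lemma per_add {L : ℝ} {g h : E3 → ℝ} (h1 : Per L g) (h2 : Per L h) :
    Per L (fun p => g p + h p) :=
  ⟨fun x y z => by simp only [h1.1, h2.1], fun x y z => by simp only [h1.2.1, h2.2.1],
   fun x y z => by simp only [h1.2.2, h2.2.2]⟩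
lemma per_mul {L : ℝ} {g h : E3 → ℝ} (h1 : Per L g) (h2 : Per L h) :
    Per L (fun p => g p * h p) :=
  ⟨fun x y z => by simp only [h1.1, h2.1], fun x y z => by simp only [h1.2.1, h2.2.1],
   fun x y z => by simp only [h1.2.2, h2.2.2]⟩
lemma per_cmul {L : ℝ} {g : E3 → ℝ} (c : ℝ) (h1 : Per L g) :
    Per L (fun p => c * g p) :=
  ⟨fun x y z => by simp only [h1.1], fun x y z => by simp only [h1.2.1],
   fun x y z => by simp only [h1.2.2]⟩
lemma per_sub {L : ℝ} {g h : E3 → ℝ} (h1 : Per L g) (h2 : Per L h) :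
    Per L (fun p => g p - h p) :=
  ⟨fun x y z => by simp only [h1.1, h2.1], fun x y z => by simp only [h1.2.1, h2.2.1],
   fun x y z => by simp only [h1.2.2, h2.2.2]⟩

lemma per_td {L : ℝ} {f : ℝ → E3 → ℝ} (hper : ∀ r, Per L (f r)) (s : ℝ) :
    Per L (td f s) :=
  ⟨fun x y z => by unfold HMtool.td; rw [funext fun r => (hper r).1 x y z],
   fun x y z => by unfold HMtool.td; rw [funext fun r => (hper r).2.1 x y z],
   fun x y z => by unfold HMtool.td; rw [funext fun r => (hper r).2.2 x y z]⟩

section pdarith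
variable {g h : E3 → ℝ} {p : E3}

lemma pdv_add (hg : DifferentiableAt ℝ g p) (hh : DifferentiableAt ℝ h p) (v : E3) :
    fderiv ℝ (fun q => g q + h q) p v = fderiv ℝ g p v + fderiv ℝ h p v := by
  rw [fderiv_fun_add hg hh]; rfl
lemma pdv_mul (hg : DifferentiableAt ℝ g p) (hh : DifferentiableAt ℝ h p) (v : E3) :
    fderiv ℝ (fun q => g q * h q) p v = fderiv ℝ g p v * h p + g p * fderiv ℝ h p v := by
  rw [fderiv_fun_mul hg hh]; simp; ring
lemma pdv_cmul (c : ℝ) (hg : DifferentiableAt ℝ g p) (v : E3) :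
    fderiv ℝ (fun q => c * g q) p v = c * fderiv ℝ g p v := by
  rw [fderiv_const_mul hg]; rfl
lemma pdv_sub (hg : DifferentiableAt ℝ g p) (hh : DifferentiableAt ℝ h p) (v : E3) :
    fderiv ℝ (fun q => g q - h q) p v = fderiv ℝ g p v - fderiv ℝ h p v := by
  rw [fderiv_fun_sub hg hh]; rfl
lemma pdv_neg (v : E3) :
    fderiv ℝ (fun q => -(g q)) p v = -(fderiv ℝ g p v) := by
  rw [fderiv_fun_neg]; rfl

lemma pdx_add (hg : DifferentiableAt ℝ g p) (hh : DifferentiableAt ℝ h p) :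
    pdx (fun q => g q + h q) p = pdx g p + pdx h p := pdv_add hg hh _
lemma pdy_add (hg : DifferentiableAt ℝ g p) (hh : DifferentiableAt ℝ h p) :
    pdy (fun q => g q + h q) p = pdy g p + pdy h p := pdv_add hg hh _
lemma pdz_add (hg : DifferentiableAt ℝ g p) (hh : DifferentiableAt ℝ h p) :
    pdz (fun q => g q + h q) p = pdz g p + pdz h p := pdv_add hg hh _
lemma pdx_mul (hg : DifferentiableAt ℝ g p) (hh : DifferentiableAt ℝ h p) :
    pdx (fun q => g q * h q) p = pdx g p * h p + g p * pdx h p := pdv_mul hg hh _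
lemma pdy_mul (hg : DifferentiableAt ℝ g p) (hh : DifferentiableAt ℝ h p) :
    pdy (fun q => g q * h q) p = pdy g p * h p + g p * pdy h p := pdv_mul hg hh _
lemma pdz_mul (hg : DifferentiableAt ℝ g p) (hh : DifferentiableAt ℝ h p) :
    pdz (fun q => g q * h q) p = pdz g p * h p + g p * pdz h p := pdv_mul hg hh _
lemma pdx_cmul (c : ℝ) (hg : DifferentiableAt ℝ g p) :
    pdx (fun q => c * g q) p = c * pdx g p := pdv_cmul c hg _
lemma pdy_cmul (c : ℝ) (hg : DifferentiableAt ℝ g p) :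
    pdy (fun q => c * g q) p = c * pdy g p := pdv_cmul c hg _
lemma pdz_cmul (c : ℝ) (hg : DifferentiableAt ℝ g p) :
    pdz (fun q => c * g q) p = c * pdz g p := pdv_cmul c hg _
lemma pdx_sub (hg : DifferentiableAt ℝ g p) (hh : DifferentiableAt ℝ h p) :
    pdx (fun q => g q - h q) p = pdx g p - pdx h p := pdv_sub hg hh _
lemma pdy_sub (hg : DifferentiableAt ℝ g p) (hh : DifferentiableAt ℝ h p) :
    pdy (fun q => g q - h q) p = pdy g p - pdy h p := pdv_sub hg hh _
lemma pdz_sub (hg : DifferentiableAt ℝ g p) (hh : DifferentiableAt ℝ h p) :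
    pdz (fun q => g q - h q) p = pdz g p - pdz h p := pdv_sub hg hh _
lemma pdx_neg' : pdx (fun q => -(g q)) p = -(pdx g p) := pdv_neg _
lemma pdy_neg' : pdy (fun q => -(g q)) p = -(pdy g p) := pdv_neg _
end pdarith

end toolkit2
section toolkit3
open HMtool Function Filter

lemma Box_eq (L : ℝ) : Box L = Icc 0 L ×ˢ (Icc 0 L ×ˢ Icc 0 1) := rfl

lemma box_compact (L : ℝ) : IsCompact (Box L) :=
  isCompact_Icc.prod (isCompact_Icc.prod isCompact_Icc)

lemma box_measurable (L : ℝ) : MeasurableSet (Box L) :=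
  measurableSet_Icc.prod (measurableSet_Icc.prod measurableSet_Icc)

lemma ftc_slice_x {L : ℝ} (hL : 0 < L) (g : E3 → ℝ) (hg : ContDiff ℝ (⊤ : ℕ∞) g)
    (hper : ∀ x y z, g (x + L, y, z) = g (x, y, z)) (y z : ℝ) :
    ∫ x in Icc (0:ℝ) L, pdx g (x, y, z) = 0 := by
  have hc : Continuous (fun x : ℝ => pdx g (x, y, z)) :=
    (contDiff_pdx g hg).continuous.comp (continuous_id.prodMk continuous_const)
  have hd : ∀ x : ℝ, HasDerivAt (fun x' => g (x', y, z)) (pdx g (x, y, z)) x := fun x =>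
    ((hg.differentiable (by simp)) (x, y, z)).hasFDerivAt.comp_hasDerivAt x
      (HasDerivAt.prodMk (hasDerivAt_id x) (hasDerivAt_const x ((y, z) : ℝ × ℝ)))
  rw [MeasureTheory.integral_Icc_eq_integral_Ioc, ← intervalIntegral.integral_of_le hL.le,
    intervalIntegral.integral_eq_sub_of_hasDerivAt (fun x _ => hd x) (hc.intervalIntegrable 0 L)]
  have h := hper 0 y z
  rw [zero_add] at h
  rw [h, sub_self]

lemma ftc_slice_y {L : ℝ} (hL : 0 < L) (g : E3 → ℝ) (hg : ContDiff ℝ (⊤ : ℕ∞) g)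
    (hper : ∀ x y z, g (x, y + L, z) = g (x, y, z)) (x z : ℝ) :
    ∫ y in Icc (0:ℝ) L, pdy g (x, y, z) = 0 := by
  have hc : Continuous (fun y : ℝ => pdy g (x, y, z)) :=
    (contDiff_pdy g hg).continuous.comp (continuous_const.prodMk (continuous_id.prodMk continuous_const))
  have hd : ∀ y : ℝ, HasDerivAt (fun y' => g (x, y', z)) (pdy g (x, y, z)) y := fun y =>
    ((hg.differentiable (by simp)) (x, y, z)).hasFDerivAt.comp_hasDerivAt y
      (HasDerivAt.prodMk (hasDerivAt_const y x) (HasDerivAt.prodMk (hasDerivAt_id y) (hasDerivAt_const y z)))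
  rw [MeasureTheory.integral_Icc_eq_integral_Ioc, ← intervalIntegral.integral_of_le hL.le,
    intervalIntegral.integral_eq_sub_of_hasDerivAt (fun y _ => hd y) (hc.intervalIntegrable 0 L)]
  have h := hper x 0 z
  rw [zero_add] at h
  rw [h, sub_self]

lemma ftc_slice_z (g : E3 → ℝ) (hg : ContDiff ℝ (⊤ : ℕ∞) g)
    (hper : ∀ x y z, g (x, y, z + 1) = g (x, y, z)) (x y : ℝ) :
    ∫ z in Icc (0:ℝ) 1, pdz g (x, y, z) = 0 := by
  have hc : Continuous (fun z : ℝ => pdz g (x, y, z)) :=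
    (contDiff_pdz g hg).continuous.comp (continuous_const.prodMk (continuous_const.prodMk continuous_id))
  have hd : ∀ z : ℝ, HasDerivAt (fun z' => g (x, y, z')) (pdz g (x, y, z)) z := fun z =>
    ((hg.differentiable (by simp)) (x, y, z)).hasFDerivAt.comp_hasDerivAt z
      (HasDerivAt.prodMk (hasDerivAt_const z x) (HasDerivAt.prodMk (hasDerivAt_const z y) (hasDerivAt_id z)))
  rw [MeasureTheory.integral_Icc_eq_integral_Ioc, ← intervalIntegral.integral_of_le zero_le_one,
    intervalIntegral.integral_eq_sub_of_hasDerivAt (fun z _ => hd z) (hc.intervalIntegrable 0 1)]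
  have h := hper x y 0
  rw [zero_add] at h
  rw [h, sub_self]

lemma box_iterated {L : ℝ} (g : E3 → ℝ) (hg : Continuous g) :
    ∫ p in Box L, g p = ∫ x in Icc (0:ℝ) L, ∫ q in (Icc (0:ℝ) L ×ˢ Icc (0:ℝ) 1), g (x, q) := by
  have hint : IntegrableOn g (Box L) := hg.continuousOn.integrableOn_compact (box_compact L)
  rw [Box_eq] at hint ⊢
  rw [MeasureTheory.Measure.volume_eq_prod] at hint ⊢
  exact MeasureTheory.setIntegral_prod g hint

lemma sq_iterated (g : ℝ × ℝ → ℝ) (hg : Continuous g) :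
    ∫ q in (Icc (0:ℝ) L ×ˢ Icc (0:ℝ) 1), g q = ∫ y in Icc (0:ℝ) L, ∫ z in Icc (0:ℝ) 1, g (y, z) := by
  have hint : IntegrableOn g (Icc (0:ℝ) L ×ˢ Icc (0:ℝ) 1) :=
    hg.continuousOn.integrableOn_compact (isCompact_Icc.prod isCompact_Icc)
  rw [MeasureTheory.Measure.volume_eq_prod] at hint ⊢
  exact MeasureTheory.setIntegral_prod g hint

lemma box_pdx_zero {L : ℝ} (hL : 0 < L) (g : E3 → ℝ) (hg : ContDiff ℝ (⊤ : ℕ∞) g) (hper : Per L g) :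
    ∫ p in Box L, pdx g p = 0 := by
  have hcont : Continuous (pdx g) := (contDiff_pdx g hg).continuous
  rw [box_iterated (pdx g) hcont]
  have hswap : ∫ x in Icc (0:ℝ) L, ∫ q in (Icc (0:ℝ) L ×ˢ Icc (0:ℝ) 1), pdx g (x, q)
      = ∫ q in (Icc (0:ℝ) L ×ˢ Icc (0:ℝ) 1), ∫ x in Icc (0:ℝ) L, pdx g (x, q) := by
    apply MeasureTheory.integral_integral_swap
    rw [MeasureTheory.Measure.prod_restrict]
    have hint : IntegrableOn (pdx g) (Box L) := hcont.continuousOn.integrableOn_compact (box_compact L)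
    rw [Box_eq, MeasureTheory.Measure.volume_eq_prod] at hint
    exact hint
  rw [hswap]
  have hz : ∀ q : ℝ × ℝ, ∫ x in Icc (0:ℝ) L, pdx g (x, q) = 0 := fun q =>
    ftc_slice_x hL g hg hper.1 q.1 q.2
  simp [hz]

lemma box_pdy_zero {L : ℝ} (hL : 0 < L) (g : E3 → ℝ) (hg : ContDiff ℝ (⊤ : ℕ∞) g) (hper : Per L g) :
    ∫ p in Box L, pdy g p = 0 := by
  have hcont : Continuous (pdy g) := (contDiff_pdy g hg).continuous
  rw [box_iterated (pdy g) hcont]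
  have hz : ∀ x : ℝ, ∫ q in (Icc (0:ℝ) L ×ˢ Icc (0:ℝ) 1), pdy g (x, q) = 0 := by
    intro x
    have hcx : Continuous (fun q : ℝ × ℝ => pdy g (x, q)) :=
      hcont.comp (continuous_const.prodMk continuous_id)
    rw [sq_iterated _ hcx]
    have hswap : ∫ y in Icc (0:ℝ) L, ∫ z in Icc (0:ℝ) 1, pdy g (x, y, z)
        = ∫ z in Icc (0:ℝ) 1, ∫ y in Icc (0:ℝ) L, pdy g (x, y, z) := by
      apply MeasureTheory.integral_integral_swap
      rw [MeasureTheory.Measure.prod_restrict]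
      have hint : IntegrableOn (fun q : ℝ × ℝ => pdy g (x, q)) (Icc (0:ℝ) L ×ˢ Icc (0:ℝ) 1) :=
        hcx.continuousOn.integrableOn_compact (isCompact_Icc.prod isCompact_Icc)
      rw [MeasureTheory.Measure.volume_eq_prod] at hint
      exact hint
    rw [hswap]
    have hzz : ∀ z : ℝ, ∫ y in Icc (0:ℝ) L, pdy g (x, y, z) = 0 := fun z =>
      ftc_slice_y hL g hg hper.2.1 x z
    simp only [hzz, MeasureTheory.integral_zero]
  simp only [hz, MeasureTheory.integral_zero]

lemma box_pdz_zero {L : ℝ} (g : E3 → ℝ) (hg : ContDiff ℝ (⊤ : ℕ∞) g) (hper : Per L g) :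
    ∫ p in Box L, pdz g p = 0 := by
  have hcont : Continuous (pdz g) := (contDiff_pdz g hg).continuous
  rw [box_iterated (pdz g) hcont]
  have hz : ∀ x : ℝ, ∫ q in (Icc (0:ℝ) L ×ˢ Icc (0:ℝ) 1), pdz g (x, q) = 0 := by
    intro x
    have hcx : Continuous (fun q : ℝ × ℝ => pdz g (x, q)) :=
      hcont.comp (continuous_const.prodMk continuous_id)
    rw [sq_iterated _ hcx]
    have hzz : ∀ y : ℝ, ∫ z in Icc (0:ℝ) 1, pdz g (x, y, z) = 0 := fun y =>
      ftc_slice_z g hg hper.2.2 x y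
    simp only [hzz, MeasureTheory.integral_zero]
  simp only [hz, MeasureTheory.integral_zero]

/-- differentiation under the integral sign over the box -/
lemma hasDerivAt_box {L : ℝ} (F : ℝ → E3 → ℝ) (hF : ContDiff ℝ (⊤ : ℕ∞) (uncurry F)) (t : ℝ) :
    HasDerivAt (fun s => ∫ p in Box L, F s p) (∫ p in Box L, td F t p) t := by
  have hcontF' : Continuous (fun x : ℝ × E3 => fderiv ℝ (uncurry F) x (1, 0)) :=
    (contDiff_fderiv_apply hF (1, 0)).continuous
  obtain ⟨C, hC⟩ := ((isCompact_Icc (a := t - 1) (b := t + 1)).prod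
    (box_compact L)).exists_bound_of_continuousOn hcontF'.continuousOn
  have key := hasDerivAt_integral_of_dominated_loc_of_deriv_le
    (μ := volume.restrict (Box L)) (F := F) (F' := fun s p => td F s p) (x₀ := t)
    (bound := fun _ => C) (s := Metric.ball t 1) (Metric.ball_mem_nhds t one_pos)
    (Eventually.of_forall fun s => ((contDiff_slice hF s).continuous).aestronglyMeasurable)
    ((contDiff_slice hF t).continuous.continuousOn.integrableOn_compact (box_compact L))
    ((contDiff_td hF t).continuous.aestronglyMeasurable)
    ?_ ?_ ?_
  · exact key.2
  · refine (MeasureTheory.ae_restrict_mem (box_measurable L)).mono fun p hp => fun s hs => ?_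
    show ‖td F s p‖ ≤ C
    rw [td_rep hF s p]
    refine hC (s, p) ⟨?_, hp⟩
    have := abs_lt.1 (by simpa [Real.dist_eq] using Metric.mem_ball.1 hs)
    exact ⟨by linarith [this.1], by linarith [this.2]⟩
  · exact MeasureTheory.integrableOn_const (box_compact L).measure_lt_top.ne
  · exact Eventually.of_forall fun p => fun s _ => hasDerivAt_time hF s p

end toolkit3
section main
open HMtool Function Filter

/-- x-component of the flux field -/
def AA (Re : ℝ) (u1 u2 w ψ : ℝ → E3 → ℝ) (r : ℝ) : E3 → ℝ := fun q =>
  (-(1:ℝ)/2) * (u1 r q * (w r q * w r q))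
  + (1/Re) * (w r q * pdx (w r) q)
  + (1/Re) * (ψ r q * pdx (omg u1 u2 r) q)
  + (1/Re) * (u2 r q * pdx (u2 r) q)
  + (-(1/Re)) * (u1 r q * pdy (u2 r) q)
  + ψ r q * pdx (td ψ r) q
  + (-(1:ℝ)) * (ψ r q * (u1 r q * omg u1 u2 r q))

/-- y-component of the flux field -/
def BB (Re : ℝ) (u1 u2 w ψ : ℝ → E3 → ℝ) (r : ℝ) : E3 → ℝ := fun q =>
  (-(1:ℝ)/2) * (u2 r q * (w r q * w r q))
  + (1/Re) * (w r q * pdy (w r) q)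
  + (1/Re) * (ψ r q * pdy (omg u1 u2 r) q)
  + (-(1/Re)) * (u2 r q * pdx (u1 r) q)
  + (1/Re) * (u1 r q * pdy (u1 r) q)
  + ψ r q * pdy (td ψ r) q
  + (-(1:ℝ)) * (ψ r q * (u2 r q * omg u1 u2 r q))

/-- z-component of the flux field -/
def CC (ε : ℝ) (w ψ : ℝ → E3 → ℝ) (r : ℝ) : E3 → ℝ := fun q =>
  ψ r q * w r q + ε^2 * (ψ r q * pdz (ψ r) q)

variable {L Re ε : ℝ} {u1 u2 w ψ : ℝ → E3 → ℝ}

section withhyp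
variable (hu1 : ContDiff ℝ (⊤ : ℕ∞) (uncurry u1)) (hu2 : ContDiff ℝ (⊤ : ℕ∞) (uncurry u2))
  (hw : ContDiff ℝ (⊤ : ℕ∞) (uncurry w)) (hψ : ContDiff ℝ (⊤ : ℕ∞) (uncurry ψ))

include hu1 hu2 in
lemma omg_uncurry_contDiff : ContDiff ℝ (⊤ : ℕ∞) (uncurry (omg u1 u2)) := by
  have e : uncurry (omg u1 u2) = fun x : ℝ × E3 =>
      fderiv ℝ (uncurry u2) x ((0:ℝ), (1,0,0)) - fderiv ℝ (uncurry u1) x ((0:ℝ), (0,1,0)) :=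
    funext fun x => by
      show pdx (u2 x.1) x.2 - pdy (u1 x.1) x.2 = _
      rw [pdx_def, pdy_def, pd_rep hu2 (1,0,0) x.1 x.2, pd_rep hu1 (0,1,0) x.1 x.2]
  rw [e]
  exact (contDiff_fderiv_apply hu2 _).sub (contDiff_fderiv_apply hu1 _)

include hψ in
lemma psi_x_family : ContDiff ℝ (⊤ : ℕ∞) (uncurry (fun s (q : E3) => pdx (ψ s) q)) := by
  have e : uncurry (fun s (q : E3) => pdx (ψ s) q)
      = fun x : ℝ × E3 => fderiv ℝ (uncurry ψ) x ((0:ℝ), (1,0,0)) :=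
    funext fun x => pd_rep hψ (1,0,0) x.1 x.2
  rw [e]; exact contDiff_fderiv_apply hψ _

include hψ in
lemma psi_y_family : ContDiff ℝ (⊤ : ℕ∞) (uncurry (fun s (q : E3) => pdy (ψ s) q)) := by
  have e : uncurry (fun s (q : E3) => pdy (ψ s) q)
      = fun x : ℝ × E3 => fderiv ℝ (uncurry ψ) x ((0:ℝ), (0,1,0)) :=
    funext fun x => pd_rep hψ (0,1,0) x.1 x.2
  rw [e]; exact contDiff_fderiv_apply hψ _

include hψ in
lemma psi_xx_family : ContDiff ℝ (⊤ : ℕ∞) (uncurry (fun s (q : E3) => pdx (pdx (ψ s)) q)) := by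
  have h1 := psi_x_family hψ
  have e : uncurry (fun s (q : E3) => pdx (pdx (ψ s)) q)
      = fun x : ℝ × E3 => fderiv ℝ (uncurry (fun s (q : E3) => pdx (ψ s) q)) x ((0:ℝ), (1,0,0)) :=
    funext fun x => pd_rep h1 (1,0,0) x.1 x.2
  rw [e]; exact contDiff_fderiv_apply h1 _

include hψ in
lemma psi_yy_family : ContDiff ℝ (⊤ : ℕ∞) (uncurry (fun s (q : E3) => pdy (pdy (ψ s)) q)) := by
  have h1 := psi_y_family hψ
  have e : uncurry (fun s (q : E3) => pdy (pdy (ψ s)) q)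
      = fun x : ℝ × E3 => fderiv ℝ (uncurry (fun s (q : E3) => pdy (ψ s) q)) x ((0:ℝ), (0,1,0)) :=
    funext fun x => pd_rep h1 (0,1,0) x.1 x.2
  rw [e]; exact contDiff_fderiv_apply h1 _

include hu1 hu2 hw hψ in
/-- The pointwise divergence-form identity. -/
lemma pointwise_div
    (hdiv : ∀ t p, pdx (u1 t) p + pdy (u2 t) p = 0)
    (hu1ψ : ∀ t p, u1 t p = pdy (ψ t) p)
    (hu2ψ : ∀ t p, u2 t p = -(pdx (ψ t) p))
    (hPDE1 : ∀ t p, deriv (fun s => w s p) t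
      + (u1 t p * pdx (w t) p + u2 t p * pdy (w t) p) - pdz (ψ t) p
      = (1 / Re) * (pdx (pdx (w t)) p + pdy (pdy (w t)) p))
    (hPDE2 : ∀ t p, deriv (fun s => omg u1 u2 s p) t
      + (u1 t p * pdx (omg u1 u2 t) p + u2 t p * pdy (omg u1 u2 t) p) - pdz (w t) p
      = (1 / Re) * (pdx (pdx (omg u1 u2 t)) p + pdy (pdy (omg u1 u2 t)) p)
        + ε ^ 2 * pdz (pdz (ψ t)) p)
    (r : ℝ) (p : E3) :
    w r p * td w r p + u1 r p * td u1 r p + u2 r p * td u2 r p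
      + (1/Re) * ((pdx (w r) p)^2 + (pdy (w r) p)^2 + (pdx (u1 r) p)^2
          + (pdy (u1 r) p)^2 + (pdx (u2 r) p)^2 + (pdy (u2 r) p)^2)
      + ε^2 * (pdz (ψ r) p)^2
    = pdx (AA Re u1 u2 w ψ r) p + pdy (BB Re u1 u2 w ψ r) p + pdz (CC ε w ψ r) p := by
  -- smoothness of slices
  have dw := contDiff_slice hw r
  have du1 := contDiff_slice hu1 r
  have du2 := contDiff_slice hu2 r
  have dψ := contDiff_slice hψ r
  have dOm : ContDiff ℝ (⊤ : ℕ∞) (omg u1 u2 r) := (contDiff_pdx _ du2).sub (contDiff_pdy _ du1)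
  have dtd : ContDiff ℝ (⊤ : ℕ∞) (td ψ r) := contDiff_td hψ r
  have D : ∀ {g : E3 → ℝ}, ContDiff ℝ (⊤ : ℕ∞) g → DifferentiableAt ℝ g p :=
    fun h => (h.differentiable (by simp)) p
  -- expansion of pdx AA
  have dT1 : DifferentiableAt ℝ (fun q => u1 r q * (w r q * w r q)) p :=
    (D du1).mul ((D dw).mul (D dw))
  have cT1 := dT1.const_mul (-(1:ℝ)/2)
  have dT2 : DifferentiableAt ℝ (fun q => w r q * pdx (w r) q) p :=
    (D dw).mul (D (contDiff_pdx _ dw))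
  have cT2 := dT2.const_mul (1/Re)
  have dT3 : DifferentiableAt ℝ (fun q => ψ r q * pdx (omg u1 u2 r) q) p :=
    (D dψ).mul (D (contDiff_pdx _ dOm))
  have cT3 := dT3.const_mul (1/Re)
  have dT4 : DifferentiableAt ℝ (fun q => u2 r q * pdx (u2 r) q) p :=
    (D du2).mul (D (contDiff_pdx _ du2))
  have cT4 := dT4.const_mul (1/Re)
  have dT5 : DifferentiableAt ℝ (fun q => u1 r q * pdy (u2 r) q) p :=
    (D du1).mul (D (contDiff_pdy _ du2))
  have cT5 := dT5.const_mul (-(1/Re))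
  have cT6 : DifferentiableAt ℝ (fun q => ψ r q * pdx (td ψ r) q) p :=
    (D dψ).mul (D (contDiff_pdx _ dtd))
  have dT7 : DifferentiableAt ℝ (fun q => ψ r q * (u1 r q * omg u1 u2 r q)) p :=
    (D dψ).mul ((D du1).mul (D dOm))
  have cT7 := dT7.const_mul (-(1:ℝ))
  have hA : pdx (AA Re u1 u2 w ψ r) p
      = (-(1:ℝ)/2) * (pdx (u1 r) p * (w r p * w r p)
            + u1 r p * (pdx (w r) p * w r p + w r p * pdx (w r) p))
        + (1/Re) * (pdx (w r) p * pdx (w r) p + w r p * pdx (pdx (w r)) p)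
        + (1/Re) * (pdx (ψ r) p * pdx (omg u1 u2 r) p + ψ r p * pdx (pdx (omg u1 u2 r)) p)
        + (1/Re) * (pdx (u2 r) p * pdx (u2 r) p + u2 r p * pdx (pdx (u2 r)) p)
        + (-(1/Re)) * (pdx (u1 r) p * pdy (u2 r) p + u1 r p * pdx (pdy (u2 r)) p)
        + (pdx (ψ r) p * pdx (td ψ r) p + ψ r p * pdx (pdx (td ψ r)) p)
        + (-(1:ℝ)) * (pdx (ψ r) p * (u1 r p * omg u1 u2 r p)
            + ψ r p * (pdx (u1 r) p * omg u1 u2 r p + u1 r p * pdx (omg u1 u2 r) p)) := by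
    unfold AA
    rw [pdx_add (((((cT1.fun_add cT2).fun_add cT3).fun_add cT4).fun_add cT5).fun_add cT6) cT7,
      pdx_add ((((cT1.fun_add cT2).fun_add cT3).fun_add cT4).fun_add cT5) cT6,
      pdx_add (((cT1.fun_add cT2).fun_add cT3).fun_add cT4) cT5,
      pdx_add ((cT1.fun_add cT2).fun_add cT3) cT4,
      pdx_add (cT1.fun_add cT2) cT3,
      pdx_add cT1 cT2,
      pdx_cmul _ dT1, pdx_mul (D du1) ((D dw).fun_mul (D dw)), pdx_mul (D dw) (D dw),
      pdx_cmul _ dT2, pdx_mul (D dw) (D (contDiff_pdx _ dw)),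
      pdx_cmul _ dT3, pdx_mul (D dψ) (D (contDiff_pdx _ dOm)),
      pdx_cmul _ dT4, pdx_mul (D du2) (D (contDiff_pdx _ du2)),
      pdx_cmul _ dT5, pdx_mul (D du1) (D (contDiff_pdy _ du2)),
      pdx_mul (D dψ) (D (contDiff_pdx _ dtd)),
      pdx_cmul _ dT7, pdx_mul (D dψ) ((D du1).fun_mul (D dOm)), pdx_mul (D du1) (D dOm)]
  -- expansion of pdy BB
  have eT1 : DifferentiableAt ℝ (fun q => u2 r q * (w r q * w r q)) p :=
    (D du2).mul ((D dw).mul (D dw))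
  have fT1 := eT1.const_mul (-(1:ℝ)/2)
  have eT2 : DifferentiableAt ℝ (fun q => w r q * pdy (w r) q) p :=
    (D dw).mul (D (contDiff_pdy _ dw))
  have fT2 := eT2.const_mul (1/Re)
  have eT3 : DifferentiableAt ℝ (fun q => ψ r q * pdy (omg u1 u2 r) q) p :=
    (D dψ).mul (D (contDiff_pdy _ dOm))
  have fT3 := eT3.const_mul (1/Re)
  have eT4 : DifferentiableAt ℝ (fun q => u2 r q * pdx (u1 r) q) p :=
    (D du2).mul (D (contDiff_pdx _ du1))
  have fT4 := eT4.const_mul (-(1/Re))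
  have eT5 : DifferentiableAt ℝ (fun q => u1 r q * pdy (u1 r) q) p :=
    (D du1).mul (D (contDiff_pdy _ du1))
  have fT5 := eT5.const_mul (1/Re)
  have fT6 : DifferentiableAt ℝ (fun q => ψ r q * pdy (td ψ r) q) p :=
    (D dψ).mul (D (contDiff_pdy _ dtd))
  have eT7 : DifferentiableAt ℝ (fun q => ψ r q * (u2 r q * omg u1 u2 r q)) p :=
    (D dψ).mul ((D du2).mul (D dOm))
  have fT7 := eT7.const_mul (-(1:ℝ))
  have hB : pdy (BB Re u1 u2 w ψ r) p
      = (-(1:ℝ)/2) * (pdy (u2 r) p * (w r p * w r p)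
            + u2 r p * (pdy (w r) p * w r p + w r p * pdy (w r) p))
        + (1/Re) * (pdy (w r) p * pdy (w r) p + w r p * pdy (pdy (w r)) p)
        + (1/Re) * (pdy (ψ r) p * pdy (omg u1 u2 r) p + ψ r p * pdy (pdy (omg u1 u2 r)) p)
        + (-(1/Re)) * (pdy (u2 r) p * pdx (u1 r) p + u2 r p * pdy (pdx (u1 r)) p)
        + (1/Re) * (pdy (u1 r) p * pdy (u1 r) p + u1 r p * pdy (pdy (u1 r)) p)
        + (pdy (ψ r) p * pdy (td ψ r) p + ψ r p * pdy (pdy (td ψ r)) p)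
        + (-(1:ℝ)) * (pdy (ψ r) p * (u2 r p * omg u1 u2 r p)
            + ψ r p * (pdy (u2 r) p * omg u1 u2 r p + u2 r p * pdy (omg u1 u2 r) p)) := by
    unfold BB
    rw [pdy_add (((((fT1.fun_add fT2).fun_add fT3).fun_add fT4).fun_add fT5).fun_add fT6) fT7,
      pdy_add ((((fT1.fun_add fT2).fun_add fT3).fun_add fT4).fun_add fT5) fT6,
      pdy_add (((fT1.fun_add fT2).fun_add fT3).fun_add fT4) fT5,
      pdy_add ((fT1.fun_add fT2).fun_add fT3) fT4,
      pdy_add (fT1.fun_add fT2) fT3,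
      pdy_add fT1 fT2,
      pdy_cmul _ eT1, pdy_mul (D du2) ((D dw).fun_mul (D dw)), pdy_mul (D dw) (D dw),
      pdy_cmul _ eT2, pdy_mul (D dw) (D (contDiff_pdy _ dw)),
      pdy_cmul _ eT3, pdy_mul (D dψ) (D (contDiff_pdy _ dOm)),
      pdy_cmul _ eT4, pdy_mul (D du2) (D (contDiff_pdx _ du1)),
      pdy_cmul _ eT5, pdy_mul (D du1) (D (contDiff_pdy _ du1)),
      pdy_mul (D dψ) (D (contDiff_pdy _ dtd)),
      pdy_cmul _ eT7, pdy_mul (D dψ) ((D du2).fun_mul (D dOm)), pdy_mul (D du2) (D dOm)]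
  -- expansion of pdz CC
  have gT1 : DifferentiableAt ℝ (fun q => ψ r q * w r q) p := (D dψ).mul (D dw)
  have gT2 : DifferentiableAt ℝ (fun q => ψ r q * pdz (ψ r) q) p :=
    (D dψ).mul (D (contDiff_pdz _ dψ))
  have hC : pdz (CC ε w ψ r) p
      = (pdz (ψ r) p * w r p + ψ r p * pdz (w r) p)
        + ε^2 * (pdz (ψ r) p * pdz (ψ r) p + ψ r p * pdz (pdz (ψ r)) p) := by
    unfold CC
    rw [pdz_add gT1 (gT2.const_mul (ε^2)), pdz_mul (D dψ) (D dw),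
      pdz_cmul _ gT2, pdz_mul (D dψ) (D (contDiff_pdz _ dψ))]
  -- relations between atoms
  have h4 : td u1 r p = pdy (td ψ r) p := by
    show deriv (fun s => u1 s p) r = _
    rw [show (fun s => u1 s p) = fun s => pdy (ψ s) p from funext fun s => hu1ψ s p]
    exact td_pd_comm hψ (0,1,0) r p
  have h5 : td u2 r p = -(pdx (td ψ r) p) := by
    show deriv (fun s => u2 s p) r = _
    rw [show (fun s => u2 s p) = fun s => -(pdx (ψ s) p) from funext fun s => hu2ψ s p,
      deriv.fun_neg]
    exact congrArg Neg.neg (td_pd_comm hψ (1,0,0) r p)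
  -- ω = -Δψ pointwise
  have hom : ∀ s q, omg u1 u2 s q = -(pdx (pdx (ψ s)) q) - pdy (pdy (ψ s)) q := by
    intro s q
    show pdx (u2 s) q - pdy (u1 s) q = _
    rw [show u2 s = fun q' => -(pdx (ψ s) q') from funext fun q' => hu2ψ s q',
      show u1 s = fun q' => pdy (ψ s) q' from funext fun q' => hu1ψ s q', pdx_neg']
  have hΦx := psi_x_family hψ
  have hΦy := psi_y_family hψ
  have hd1 : HasDerivAt (fun s => pdx (pdx (ψ s)) p) (pdx (pdx (td ψ r)) p) r := by
    have h := hasDerivAt_time (psi_xx_family hψ) r p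
    have e2 : td (fun s (q : E3) => pdx (pdx (ψ s)) q) r p = pdx (pdx (td ψ r)) p := by
      have h1 := td_pd_comm hΦx (1,0,0) r p
      have h2 : td (fun s (q : E3) => pdx (ψ s) q) r = pdx (td ψ r) :=
        funext fun q => td_pd_comm hψ (1,0,0) r q
      rw [h2] at h1
      exact h1
    rwa [e2] at h
  have hd2 : HasDerivAt (fun s => pdy (pdy (ψ s)) p) (pdy (pdy (td ψ r)) p) r := by
    have h := hasDerivAt_time (psi_yy_family hψ) r p
    have e2 : td (fun s (q : E3) => pdy (pdy (ψ s)) q) r p = pdy (pdy (td ψ r)) p := by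
      have h1 := td_pd_comm hΦy (0,1,0) r p
      have h2 : td (fun s (q : E3) => pdy (ψ s) q) r = pdy (td ψ r) :=
        funext fun q => td_pd_comm hψ (0,1,0) r q
      rw [h2] at h1
      exact h1
    rwa [e2] at h
  have h3 : td (omg u1 u2) r p = -(pdx (pdx (td ψ r)) p) - pdy (pdy (td ψ r)) p := by
    show deriv (fun s => omg u1 u2 s p) r = _
    rw [show (fun s => omg u1 u2 s p)
        = fun s => -(pdx (pdx (ψ s)) p) - pdy (pdy (ψ s)) p from funext fun s => hom s p]
    exact ((hd1.neg).sub hd2).deriv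
  -- PDE equations with td notation
  have hp1' : td w r p = pdz (ψ r) p - (u1 r p * pdx (w r) p + u2 r p * pdy (w r) p)
      + (1/Re) * (pdx (pdx (w r)) p + pdy (pdy (w r)) p) := by
    have ht : td w r p = deriv (fun s => w s p) r := rfl
    linarith [hPDE1 r p, ht]
  have h2' : td (omg u1 u2) r p = pdz (w r) p
      - (u1 r p * pdx (omg u1 u2 r) p + u2 r p * pdy (omg u1 u2 r) p)
      + (1/Re) * (pdx (pdx (omg u1 u2 r)) p + pdy (pdy (omg u1 u2 r)) p)
      + ε^2 * pdz (pdz (ψ r)) p := by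
    have ht : td (omg u1 u2) r p = deriv (fun s => omg u1 u2 s p) r := rfl
    linarith [hPDE2 r p, ht]
  have hψxx : pdx (pdx (td ψ r)) p = -(pdy (pdy (td ψ r)) p)
      - (pdz (w r) p - (u1 r p * pdx (omg u1 u2 r) p + u2 r p * pdy (omg u1 u2 r) p)
        + (1/Re) * (pdx (pdx (omg u1 u2 r)) p + pdy (pdy (omg u1 u2 r)) p)
        + ε^2 * pdz (pdz (ψ r)) p) := by
    rw [← h2']
    linarith [h3]
  -- structural relations
  have hOmx : pdx (omg u1 u2 r) p = pdx (pdx (u2 r)) p - pdx (pdy (u1 r)) p :=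
    pdx_sub (D (contDiff_pdx _ du2)) (D (contDiff_pdy _ du1))
  have hOmy : pdy (omg u1 u2 r) p = pdy (pdx (u2 r)) p - pdy (pdy (u1 r)) p :=
    pdy_sub (D (contDiff_pdx _ du2)) (D (contDiff_pdy _ du1))
  have homp : omg u1 u2 r p = pdx (u2 r) p - pdy (u1 r) p := rfl
  have hcu2 : pdx (pdy (u2 r)) p = pdy (pdx (u2 r)) p :=
    fderiv_swap (u2 r) du2 p (0,1,0) (1,0,0)
  have hcu1 : pdy (pdx (u1 r)) p = pdx (pdy (u1 r)) p :=
    fderiv_swap (u1 r) du1 p (1,0,0) (0,1,0)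
  have hdiv' : pdx (u1 r) p = -(pdy (u2 r) p) := by linarith [hdiv r p]
  have hψx : pdx (ψ r) p = -(u2 r p) := by linarith [hu2ψ r p]
  have hψy : pdy (ψ r) p = u1 r p := (hu1ψ r p).symm
  rw [hA, hB, hC, h4, h5, hp1', hψxx, hOmx, hOmy, homp, hcu2, hcu1, hdiv', hψx, hψy]
  ring
end withhyp
end main
section main2
open HMtool Function Filter

variable {L Re ε : ℝ} {u1 u2 w ψ : ℝ → E3 → ℝ}

section smoothper
variable (hu1 : ContDiff ℝ (⊤ : ℕ∞) (uncurry u1)) (hu2 : ContDiff ℝ (⊤ : ℕ∞) (uncurry u2))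
  (hw : ContDiff ℝ (⊤ : ℕ∞) (uncurry w)) (hψ : ContDiff ℝ (⊤ : ℕ∞) (uncurry ψ))

include hu1 hu2 hw hψ in
lemma AA_smooth (r : ℝ) : ContDiff ℝ (⊤ : ℕ∞) (AA Re u1 u2 w ψ r) := by
  have dw := contDiff_slice hw r
  have du1 := contDiff_slice hu1 r
  have du2 := contDiff_slice hu2 r
  have dψ := contDiff_slice hψ r
  have dOm : ContDiff ℝ (⊤ : ℕ∞) (omg u1 u2 r) := (contDiff_pdx _ du2).sub (contDiff_pdy _ du1)
  have dtd : ContDiff ℝ (⊤ : ℕ∞) (td ψ r) := contDiff_td hψ r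
  unfold AA
  exact (((((((contDiff_const.mul (du1.mul (dw.mul dw))).add
    (contDiff_const.mul (dw.mul (contDiff_pdx _ dw)))).add
    (contDiff_const.mul (dψ.mul (contDiff_pdx _ dOm)))).add
    (contDiff_const.mul (du2.mul (contDiff_pdx _ du2)))).add
    (contDiff_const.mul (du1.mul (contDiff_pdy _ du2)))).add
    (dψ.mul (contDiff_pdx _ dtd))).add
    (contDiff_const.mul (dψ.mul (du1.mul dOm))))

include hu1 hu2 hw hψ in
lemma BB_smooth (r : ℝ) : ContDiff ℝ (⊤ : ℕ∞) (BB Re u1 u2 w ψ r) := by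
  have dw := contDiff_slice hw r
  have du1 := contDiff_slice hu1 r
  have du2 := contDiff_slice hu2 r
  have dψ := contDiff_slice hψ r
  have dOm : ContDiff ℝ (⊤ : ℕ∞) (omg u1 u2 r) := (contDiff_pdx _ du2).sub (contDiff_pdy _ du1)
  have dtd : ContDiff ℝ (⊤ : ℕ∞) (td ψ r) := contDiff_td hψ r
  unfold BB
  exact (((((((contDiff_const.mul (du2.mul (dw.mul dw))).add
    (contDiff_const.mul (dw.mul (contDiff_pdy _ dw)))).add
    (contDiff_const.mul (dψ.mul (contDiff_pdy _ dOm)))).add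
    (contDiff_const.mul (du2.mul (contDiff_pdx _ du1)))).add
    (contDiff_const.mul (du1.mul (contDiff_pdy _ du1)))).add
    (dψ.mul (contDiff_pdy _ dtd))).add
    (contDiff_const.mul (dψ.mul (du2.mul dOm))))

include hw hψ in
lemma CC_smooth (r : ℝ) : ContDiff ℝ (⊤ : ℕ∞) (CC ε w ψ r) := by
  have dw := contDiff_slice hw r
  have dψ := contDiff_slice hψ r
  unfold CC
  exact (dψ.mul dw).add (contDiff_const.mul (dψ.mul (contDiff_pdz _ dψ)))

include hu1 hu2 hw hψ in
lemma AA_per (hper : ∀ t, Per L (u1 t) ∧ Per L (u2 t) ∧ Per L (w t) ∧ Per L (ψ t)) (r : ℝ) :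
    Per L (AA Re u1 u2 w ψ r) := by
  have dw := contDiff_slice hw r
  have du1 := contDiff_slice hu1 r
  have du2 := contDiff_slice hu2 r
  have dψ := contDiff_slice hψ r
  have dOm : ContDiff ℝ (⊤ : ℕ∞) (omg u1 u2 r) := (contDiff_pdx _ du2).sub (contDiff_pdy _ du1)
  have dtd : ContDiff ℝ (⊤ : ℕ∞) (td ψ r) := contDiff_td hψ r
  have pu1 := (hper r).1
  have pu2 := (hper r).2.1
  have pw := (hper r).2.2.1
  have pψ := (hper r).2.2.2
  have pOm : Per L (omg u1 u2 r) :=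
    per_sub (per_pdx pu2 (du2.differentiable (by simp))) (per_pdy pu1 (du1.differentiable (by simp)))
  have ptd : Per L (td ψ r) := per_td (fun s => (hper s).2.2.2) r
  unfold AA
  exact per_add (per_add (per_add (per_add (per_add (per_add
    (per_cmul _ (per_mul pu1 (per_mul pw pw)))
    (per_cmul _ (per_mul pw (per_pdx pw (dw.differentiable (by simp))))))
    (per_cmul _ (per_mul pψ (per_pdx pOm (dOm.differentiable (by simp))))))
    (per_cmul _ (per_mul pu2 (per_pdx pu2 (du2.differentiable (by simp))))))
    (per_cmul _ (per_mul pu1 (per_pdy pu2 (du2.differentiable (by simp))))))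
    (per_mul pψ (per_pdx ptd (dtd.differentiable (by simp)))))
    (per_cmul _ (per_mul pψ (per_mul pu1 pOm)))

include hu1 hu2 hw hψ in
lemma BB_per (hper : ∀ t, Per L (u1 t) ∧ Per L (u2 t) ∧ Per L (w t) ∧ Per L (ψ t)) (r : ℝ) :
    Per L (BB Re u1 u2 w ψ r) := by
  have dw := contDiff_slice hw r
  have du1 := contDiff_slice hu1 r
  have du2 := contDiff_slice hu2 r
  have dψ := contDiff_slice hψ r
  have dOm : ContDiff ℝ (⊤ : ℕ∞) (omg u1 u2 r) := (contDiff_pdx _ du2).sub (contDiff_pdy _ du1)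
  have dtd : ContDiff ℝ (⊤ : ℕ∞) (td ψ r) := contDiff_td hψ r
  have pu1 := (hper r).1
  have pu2 := (hper r).2.1
  have pw := (hper r).2.2.1
  have pψ := (hper r).2.2.2
  have pOm : Per L (omg u1 u2 r) :=
    per_sub (per_pdx pu2 (du2.differentiable (by simp))) (per_pdy pu1 (du1.differentiable (by simp)))
  have ptd : Per L (td ψ r) := per_td (fun s => (hper s).2.2.2) r
  unfold BB
  exact per_add (per_add (per_add (per_add (per_add (per_add
    (per_cmul _ (per_mul pu2 (per_mul pw pw)))
    (per_cmul _ (per_mul pw (per_pdy pw (dw.differentiable (by simp))))))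
    (per_cmul _ (per_mul pψ (per_pdy pOm (dOm.differentiable (by simp))))))
    (per_cmul _ (per_mul pu2 (per_pdx pu1 (du1.differentiable (by simp))))))
    (per_cmul _ (per_mul pu1 (per_pdy pu1 (du1.differentiable (by simp))))))
    (per_mul pψ (per_pdy ptd (dtd.differentiable (by simp)))))
    (per_cmul _ (per_mul pψ (per_mul pu2 pOm)))

include hw hψ in
lemma CC_per (hper : ∀ t, Per L (u1 t) ∧ Per L (u2 t) ∧ Per L (w t) ∧ Per L (ψ t)) (r : ℝ) :
    Per L (CC ε w ψ r) := by
  have dψ := contDiff_slice hψ r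
  have pw := (hper r).2.2.1
  have pψ := (hper r).2.2.2
  unfold CC
  exact per_add (per_mul pψ pw) (per_cmul _ (per_mul pψ (per_pdz pψ (dψ.differentiable (by simp)))))

include hu1 hu2 hw hψ in
/-- energy derivative plus dissipation vanishes -/
lemma energy_deriv_zero (hL : 0 < L)
    (hper : ∀ t, Per L (u1 t) ∧ Per L (u2 t) ∧ Per L (w t) ∧ Per L (ψ t))
    (hdiv : ∀ t p, pdx (u1 t) p + pdy (u2 t) p = 0)
    (hu1ψ : ∀ t p, u1 t p = pdy (ψ t) p)
    (hu2ψ : ∀ t p, u2 t p = -(pdx (ψ t) p))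
    (hPDE1 : ∀ t p, deriv (fun s => w s p) t
      + (u1 t p * pdx (w t) p + u2 t p * pdy (w t) p) - pdz (ψ t) p
      = (1 / Re) * (pdx (pdx (w t)) p + pdy (pdy (w t)) p))
    (hPDE2 : ∀ t p, deriv (fun s => omg u1 u2 s p) t
      + (u1 t p * pdx (omg u1 u2 t) p + u2 t p * pdy (omg u1 u2 t) p) - pdz (w t) p
      = (1 / Re) * (pdx (pdx (omg u1 u2 t)) p + pdy (pdy (omg u1 u2 t)) p)
        + ε ^ 2 * pdz (pdz (ψ t)) p)
    (r : ℝ) :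
    (∫ p in Box L, (w r p * td w r p + u1 r p * td u1 r p + u2 r p * td u2 r p))
      + ((1/Re) * (∫ p in Box L, ((pdx (w r) p)^2 + (pdy (w r) p)^2 + (pdx (u1 r) p)^2
          + (pdy (u1 r) p)^2 + (pdx (u2 r) p)^2 + (pdy (u2 r) p)^2))
        + ε^2 * ∫ p in Box L, (pdz (ψ r) p)^2) = 0 := by
  have dw := contDiff_slice hw r
  have du1 := contDiff_slice hu1 r
  have du2 := contDiff_slice hu2 r
  have dψ := contDiff_slice hψ r
  have c0 : Continuous (fun p : E3 => w r p * td w r p + u1 r p * td u1 r p + u2 r p * td u2 r p) :=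
    ((dw.continuous.mul (contDiff_td hw r).continuous).add
      (du1.continuous.mul (contDiff_td hu1 r).continuous)).add
      (du2.continuous.mul (contDiff_td hu2 r).continuous)
  have c1 : Continuous (fun p : E3 => (pdx (w r) p)^2 + (pdy (w r) p)^2 + (pdx (u1 r) p)^2
      + (pdy (u1 r) p)^2 + (pdx (u2 r) p)^2 + (pdy (u2 r) p)^2) :=
    ((((((contDiff_pdx _ dw).continuous.pow 2).add ((contDiff_pdy _ dw).continuous.pow 2)).add
      ((contDiff_pdx _ du1).continuous.pow 2)).add ((contDiff_pdy _ du1).continuous.pow 2)).add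
      ((contDiff_pdx _ du2).continuous.pow 2)).add ((contDiff_pdy _ du2).continuous.pow 2)
  have c2 : Continuous (fun p : E3 => (pdz (ψ r) p)^2) := (contDiff_pdz _ dψ).continuous.pow 2
  have i0 : IntegrableOn (fun p : E3 => w r p * td w r p + u1 r p * td u1 r p + u2 r p * td u2 r p)
      (Box L) := c0.continuousOn.integrableOn_compact (box_compact L)
  have i1 : IntegrableOn (fun p : E3 => (1/Re) * ((pdx (w r) p)^2 + (pdy (w r) p)^2
      + (pdx (u1 r) p)^2 + (pdy (u1 r) p)^2 + (pdx (u2 r) p)^2 + (pdy (u2 r) p)^2)) (Box L) :=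
    (continuous_const.mul c1).continuousOn.integrableOn_compact (box_compact L)
  have i2 : IntegrableOn (fun p : E3 => ε^2 * (pdz (ψ r) p)^2) (Box L) :=
    (continuous_const.mul c2).continuousOn.integrableOn_compact (box_compact L)
  have i12 : IntegrableOn (fun p : E3 => (1/Re) * ((pdx (w r) p)^2 + (pdy (w r) p)^2
      + (pdx (u1 r) p)^2 + (pdy (u1 r) p)^2 + (pdx (u2 r) p)^2 + (pdy (u2 r) p)^2)
      + ε^2 * (pdz (ψ r) p)^2) (Box L) :=
    ((continuous_const.mul c1).add (continuous_const.mul c2)).continuousOn.integrableOn_compact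
      (box_compact L)
  have e : ∀ p : E3, (w r p * td w r p + u1 r p * td u1 r p + u2 r p * td u2 r p)
      + ((1/Re) * ((pdx (w r) p)^2 + (pdy (w r) p)^2 + (pdx (u1 r) p)^2
          + (pdy (u1 r) p)^2 + (pdx (u2 r) p)^2 + (pdy (u2 r) p)^2)
        + ε^2 * (pdz (ψ r) p)^2)
      = pdx (AA Re u1 u2 w ψ r) p + pdy (BB Re u1 u2 w ψ r) p + pdz (CC ε w ψ r) p := fun p => by
    have h := pointwise_div hu1 hu2 hw hψ hdiv hu1ψ hu2ψ hPDE1 hPDE2 r p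
    linear_combination h
  have iA : IntegrableOn (pdx (AA Re u1 u2 w ψ r)) (Box L) :=
    (contDiff_pdx _ (AA_smooth hu1 hu2 hw hψ r)).continuous.continuousOn.integrableOn_compact
      (box_compact L)
  have iB : IntegrableOn (pdy (BB Re u1 u2 w ψ r)) (Box L) :=
    (contDiff_pdy _ (BB_smooth hu1 hu2 hw hψ r)).continuous.continuousOn.integrableOn_compact
      (box_compact L)
  have iC : IntegrableOn (pdz (CC ε w ψ r)) (Box L) :=
    (contDiff_pdz _ (CC_smooth hw hψ r)).continuous.continuousOn.integrableOn_compact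
      (box_compact L)
  have iAB : IntegrableOn (fun p : E3 => pdx (AA Re u1 u2 w ψ r) p + pdy (BB Re u1 u2 w ψ r) p)
      (Box L) :=
    ((contDiff_pdx _ (AA_smooth hu1 hu2 hw hψ r)).continuous.add
      (contDiff_pdy _ (BB_smooth hu1 hu2 hw hψ r)).continuous).continuousOn.integrableOn_compact
      (box_compact L)
  have key : ∫ p in Box L, ((w r p * td w r p + u1 r p * td u1 r p + u2 r p * td u2 r p)
      + ((1/Re) * ((pdx (w r) p)^2 + (pdy (w r) p)^2 + (pdx (u1 r) p)^2
          + (pdy (u1 r) p)^2 + (pdx (u2 r) p)^2 + (pdy (u2 r) p)^2)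
        + ε^2 * (pdz (ψ r) p)^2)) = 0 := by
    rw [MeasureTheory.integral_congr_ae (Filter.EventuallyEq.of_eq (funext e)),
      MeasureTheory.integral_add iAB iC, MeasureTheory.integral_add iA iB,
      box_pdx_zero hL _ (AA_smooth hu1 hu2 hw hψ r) (AA_per hu1 hu2 hw hψ hper r),
      box_pdy_zero hL _ (BB_smooth hu1 hu2 hw hψ r) (BB_per hu1 hu2 hw hψ hper r),
      box_pdz_zero _ (CC_smooth hw hψ r) (CC_per hw hψ hper r)]
    norm_num
  have hsplit : ∫ p in Box L, ((w r p * td w r p + u1 r p * td u1 r p + u2 r p * td u2 r p)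
      + ((1/Re) * ((pdx (w r) p)^2 + (pdy (w r) p)^2 + (pdx (u1 r) p)^2
          + (pdy (u1 r) p)^2 + (pdx (u2 r) p)^2 + (pdy (u2 r) p)^2)
        + ε^2 * (pdz (ψ r) p)^2))
      = (∫ p in Box L, (w r p * td w r p + u1 r p * td u1 r p + u2 r p * td u2 r p))
        + ((∫ p in Box L, (1/Re) * ((pdx (w r) p)^2 + (pdy (w r) p)^2 + (pdx (u1 r) p)^2
            + (pdy (u1 r) p)^2 + (pdx (u2 r) p)^2 + (pdy (u2 r) p)^2))
          + ∫ p in Box L, ε^2 * (pdz (ψ r) p)^2) := by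
    rw [MeasureTheory.integral_add i0 i12, MeasureTheory.integral_add i1 i2]
  have m1 : ∫ p in Box L, (1/Re) * ((pdx (w r) p)^2 + (pdy (w r) p)^2 + (pdx (u1 r) p)^2
      + (pdy (u1 r) p)^2 + (pdx (u2 r) p)^2 + (pdy (u2 r) p)^2)
      = (1/Re) * ∫ p in Box L, ((pdx (w r) p)^2 + (pdy (w r) p)^2 + (pdx (u1 r) p)^2
      + (pdy (u1 r) p)^2 + (pdx (u2 r) p)^2 + (pdy (u2 r) p)^2) :=
    MeasureTheory.integral_const_mul _ _
  have m2 : ∫ p in Box L, ε^2 * (pdz (ψ r) p)^2 = ε^2 * ∫ p in Box L, (pdz (ψ r) p)^2 :=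
    MeasureTheory.integral_const_mul _ _
  linarith [key, hsplit, m1, m2]
end smoothper
end main2
section final
open HMtool Function Filter

theorem stmt12' (L Re ε : ℝ) (hL : 0 < L) (hRe : 0 < Re) (hε : 0 < ε)
    (u1 u2 w ψ : ℝ → ℝ × ℝ × ℝ → ℝ) (hsol : IsSol L Re ε u1 u2 w ψ)
    (t : ℝ) (ht : 0 ≤ t) :
    (1/2) * (∫ p in Box L, (w t p) ^ 2 + (u1 t p) ^ 2 + (u2 t p) ^ 2)
      + (∫ s in (0:ℝ)..t,
          ((1/Re) * (∫ p in Box L,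
              (pdx (w s) p) ^ 2 + (pdy (w s) p) ^ 2
              + (pdx (u1 s) p) ^ 2 + (pdy (u1 s) p) ^ 2
              + (pdx (u2 s) p) ^ 2 + (pdy (u2 s) p) ^ 2)
            + ε ^ 2 * ∫ p in Box L, (pdz (ψ s) p) ^ 2))
      = (1/2) * ∫ p in Box L, (w 0 p) ^ 2 + (u1 0 p) ^ 2 + (u2 0 p) ^ 2 := by
  obtain ⟨hu1, hu2, hw, hψ, hper, hdiv, hu1ψ, hu2ψ, hmean, hPDE1, hPDE2⟩ := hsol
  -- smoothness of the energy density family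
  have hGsm : ContDiff ℝ (⊤ : ℕ∞) (uncurry (fun s (p : E3) => (w s p)^2 + (u1 s p)^2 + (u2 s p)^2)) :=
    ((hw.pow 2).add (hu1.pow 2)).add (hu2.pow 2)
  -- smoothness of the dissipation density families
  have hFwsm : ContDiff ℝ (⊤ : ℕ∞) (uncurry (fun s (p : E3) => (pdx (w s) p)^2 + (pdy (w s) p)^2
      + (pdx (u1 s) p)^2 + (pdy (u1 s) p)^2 + (pdx (u2 s) p)^2 + (pdy (u2 s) p)^2)) := by
    have e : uncurry (fun s (p : E3) => (pdx (w s) p)^2 + (pdy (w s) p)^2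
        + (pdx (u1 s) p)^2 + (pdy (u1 s) p)^2 + (pdx (u2 s) p)^2 + (pdy (u2 s) p)^2)
        = fun x : ℝ × E3 =>
          (fderiv ℝ (uncurry w) x ((0:ℝ),(1,0,0)))^2 + (fderiv ℝ (uncurry w) x ((0:ℝ),(0,1,0)))^2
          + (fderiv ℝ (uncurry u1) x ((0:ℝ),(1,0,0)))^2 + (fderiv ℝ (uncurry u1) x ((0:ℝ),(0,1,0)))^2
          + (fderiv ℝ (uncurry u2) x ((0:ℝ),(1,0,0)))^2 + (fderiv ℝ (uncurry u2) x ((0:ℝ),(0,1,0)))^2 :=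
      funext fun x => by
        show (pdx (w x.1) x.2)^2 + (pdy (w x.1) x.2)^2 + (pdx (u1 x.1) x.2)^2
          + (pdy (u1 x.1) x.2)^2 + (pdx (u2 x.1) x.2)^2 + (pdy (u2 x.1) x.2)^2 = _
        simp only [pdx_def, pdy_def]
        rw [pd_rep hw (1,0,0) x.1 x.2, pd_rep hw (0,1,0) x.1 x.2,
          pd_rep hu1 (1,0,0) x.1 x.2, pd_rep hu1 (0,1,0) x.1 x.2,
          pd_rep hu2 (1,0,0) x.1 x.2, pd_rep hu2 (0,1,0) x.1 x.2]
    rw [e]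
    exact ((((((contDiff_fderiv_apply hw _).pow 2).add
      ((contDiff_fderiv_apply hw _).pow 2)).add
      ((contDiff_fderiv_apply hu1 _).pow 2)).add
      ((contDiff_fderiv_apply hu1 _).pow 2)).add
      ((contDiff_fderiv_apply hu2 _).pow 2)).add
      ((contDiff_fderiv_apply hu2 _).pow 2)
  have hFzsm : ContDiff ℝ (⊤ : ℕ∞) (uncurry (fun s (p : E3) => (pdz (ψ s) p)^2)) := by
    have e : uncurry (fun s (p : E3) => (pdz (ψ s) p)^2)
        = fun x : ℝ × E3 => (fderiv ℝ (uncurry ψ) x ((0:ℝ),(0,0,1)))^2 :=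
      funext fun x => by
        show (pdz (ψ x.1) x.2)^2 = _
        simp only [pdz_def]
        rw [pd_rep hψ (0,0,1) x.1 x.2]
    rw [e]
    exact (contDiff_fderiv_apply hψ _).pow 2
  -- derivative of the energy
  have hEderiv : ∀ r : ℝ, HasDerivAt
      (fun s => ∫ p in Box L, ((w s p)^2 + (u1 s p)^2 + (u2 s p)^2))
      (∫ p in Box L, 2 * (w r p * td w r p + u1 r p * td u1 r p + u2 r p * td u2 r p)) r := by
    intro r
    have h := hasDerivAt_box (L := L) _ hGsm r
    have e : (fun p : E3 => td (fun s (p : E3) => (w s p)^2 + (u1 s p)^2 + (u2 s p)^2) r p)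
        = fun p : E3 => 2 * (w r p * td w r p + u1 r p * td u1 r p + u2 r p * td u2 r p) :=
      funext fun p => by
        have h1 := (hasDerivAt_time hw r p).fun_pow 2
        have h2 := (hasDerivAt_time hu1 r p).fun_pow 2
        have h3 := (hasDerivAt_time hu2 r p).fun_pow 2
        have hd := ((h1.fun_add h2).fun_add h3).deriv
        show deriv (fun s => (w s p)^2 + (u1 s p)^2 + (u2 s p)^2) r = _
        rw [hd]
        push_cast
        ring
    rwa [e] at h
  -- continuity of dissipation terms
  have hcont1 : Continuous (fun s => ∫ p in Box L, ((pdx (w s) p)^2 + (pdy (w s) p)^2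
      + (pdx (u1 s) p)^2 + (pdy (u1 s) p)^2 + (pdx (u2 s) p)^2 + (pdy (u2 s) p)^2)) :=
    continuous_iff_continuousAt.mpr fun r => (hasDerivAt_box (L := L) _ hFwsm r).continuousAt
  have hcont2 : Continuous (fun s => ∫ p in Box L, (pdz (ψ s) p)^2) :=
    continuous_iff_continuousAt.mpr fun r => (hasDerivAt_box (L := L) _ hFzsm r).continuousAt
  have hcontD : Continuous (fun s => (1/Re) * (∫ p in Box L, ((pdx (w s) p)^2 + (pdy (w s) p)^2
      + (pdx (u1 s) p)^2 + (pdy (u1 s) p)^2 + (pdx (u2 s) p)^2 + (pdy (u2 s) p)^2))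
      + ε^2 * ∫ p in Box L, (pdz (ψ s) p)^2) :=
    (continuous_const.mul hcont1).add (continuous_const.mul hcont2)
  -- the total quantity has zero derivative
  have hΦ : ∀ x : ℝ, HasDerivAt (fun y =>
      (1/2) * (∫ p in Box L, ((w y p)^2 + (u1 y p)^2 + (u2 y p)^2))
      + ∫ s in (0:ℝ)..y, ((1/Re) * (∫ p in Box L, ((pdx (w s) p)^2 + (pdy (w s) p)^2
          + (pdx (u1 s) p)^2 + (pdy (u1 s) p)^2 + (pdx (u2 s) p)^2 + (pdy (u2 s) p)^2))
        + ε^2 * ∫ p in Box L, (pdz (ψ s) p)^2)) 0 x := by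
    intro x
    have h1 := (hEderiv x).const_mul (1/2 : ℝ)
    have h2 : HasDerivAt (fun y => ∫ s in (0:ℝ)..y,
        ((1/Re) * (∫ p in Box L, ((pdx (w s) p)^2 + (pdy (w s) p)^2
          + (pdx (u1 s) p)^2 + (pdy (u1 s) p)^2 + (pdx (u2 s) p)^2 + (pdy (u2 s) p)^2))
        + ε^2 * ∫ p in Box L, (pdz (ψ s) p)^2))
        ((1/Re) * (∫ p in Box L, ((pdx (w x) p)^2 + (pdy (w x) p)^2
          + (pdx (u1 x) p)^2 + (pdy (u1 x) p)^2 + (pdx (u2 x) p)^2 + (pdy (u2 x) p)^2))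
        + ε^2 * ∫ p in Box L, (pdz (ψ x) p)^2) x :=
      intervalIntegral.integral_hasDerivAt_right (hcontD.intervalIntegrable _ _)
        hcontD.stronglyMeasurable.stronglyMeasurableAtFilter hcontD.continuousAt
    have h3 := h1.add h2
    have hval : (1/2 : ℝ) * (∫ p in Box L,
          2 * (w x p * td w x p + u1 x p * td u1 x p + u2 x p * td u2 x p))
        + ((1/Re) * (∫ p in Box L, ((pdx (w x) p)^2 + (pdy (w x) p)^2
          + (pdx (u1 x) p)^2 + (pdy (u1 x) p)^2 + (pdx (u2 x) p)^2 + (pdy (u2 x) p)^2))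
        + ε^2 * ∫ p in Box L, (pdz (ψ x) p)^2) = 0 := by
      rw [MeasureTheory.integral_const_mul]
      have h0 := energy_deriv_zero hu1 hu2 hw hψ hL hper hdiv hu1ψ hu2ψ hPDE1 hPDE2 x
      linarith
    rwa [hval] at h3
  have hconst := is_const_of_deriv_eq_zero (𝕜 := ℝ)
    (fun x => (hΦ x).differentiableAt) (fun x => (hΦ x).deriv) t 0
  simpa [intervalIntegral.integral_same] using hconst
end final

/-- Energy identity for the viscous Hasegawa–Mima system. -/
theorem stmt12 (L Re ε : ℝ) (hL : 0 < L) (hRe : 0 < Re) (hε : 0 < ε)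
    (u1 u2 w ψ : ℝ → ℝ × ℝ × ℝ → ℝ) (hsol : IsSol L Re ε u1 u2 w ψ)
    (t : ℝ) (ht : 0 ≤ t) :
    (1/2) * (∫ p in Box L, (w t p) ^ 2 + (u1 t p) ^ 2 + (u2 t p) ^ 2)
      + (∫ s in (0:ℝ)..t,
          ((1/Re) * (∫ p in Box L,
              (pdx (w s) p) ^ 2 + (pdy (w s) p) ^ 2
              + (pdx (u1 s) p) ^ 2 + (pdy (u1 s) p) ^ 2
              + (pdx (u2 s) p) ^ 2 + (pdy (u2 s) p) ^ 2)
            + ε ^ 2 * ∫ p in Box L, (pdz (ψ s) p) ^ 2))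
      = (1/2) * ∫ p in Box L, (w 0 p) ^ 2 + (u1 0 p) ^ 2 + (u2 0 p) ^ 2 :=
  stmt12' L Re ε hL hRe hε u1 u2 w ψ hsol t ht
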